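/- arXiv:1909.03899 — 8 statements merged into one kernel-verified Lean document; each statement's English description precedes it below -/
import Mathlib

section
/- Let G = C₃ × C₃ with generators x = (1,0) and y = (0,1). The four pairs (x,y), (x,xy), (y,xy²), (y,xy) each generate G, and the intersection Σ(x,y) ∩ Σ(x,xy) ∩ Σ(y,xy²) ∩ Σ(y,xy) equals {e}. -/
/-!
`G` is the plane `𝔽₃²`, so its subgroups are its `𝔽₃`-subspaces and both claims become finite
linear algebra: each of the four pairs is a basis, and each `Σ` is the union of three of the four
lines of the plane. The four `Σ`'s omit four different lines, and every nonzero vector lies on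
exactly one line, so only `0` lies in all of them.
-/

/-- Additive version of Σ for abelian groups: union of the cyclic subgroups
generated by `x`, `y` and `x + y` (conjugation is trivial). -/
def ASigma {G : Type*} [AddCommGroup G] (x y : G) : Set G :=
  (AddSubgroup.zmultiples x : Set G) ∪ (AddSubgroup.zmultiples y : Set G) ∪
    (AddSubgroup.zmultiples (x + y) : Set G)

section ZModModule

variable {M : Type*} [AddCommGroup M] {n : ℕ} [Module (ZMod n) M]

theorem AddSubgroup.closure_eq_toAddSubgroup_span (s : Set M) :
    AddSubgroup.closure s = (Submodule.span (ZMod n) s).toAddSubgroup := by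
  rw [← Submodule.span_int_eq_addSubgroupClosure,
    ← Submodule.restrictScalars_span ℤ (ZMod n) ZMod.intCast_surjective]
  rfl

theorem AddSubgroup.mem_zmultiples_iff_exists_zmod_smul {g a : M} :
    a ∈ AddSubgroup.zmultiples g ↔ ∃ c : ZMod n, c • g = a := by
  rw [AddSubgroup.zmultiples_eq_closure, AddSubgroup.closure_eq_toAddSubgroup_span (n := n),
    Submodule.mem_toAddSubgroup, Submodule.mem_span_singleton]

theorem AddSubgroup.closure_pair_eq_top_iff_zmod {u v : M} :
    AddSubgroup.closure {u, v} = ⊤ ↔ ∀ g : M, ∃ a b : ZMod n, a • u + b • v = g := by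
  simp only [AddSubgroup.closure_eq_toAddSubgroup_span (n := n), Submodule.toAddSubgroup_eq_top,
    Submodule.eq_top_iff', Submodule.mem_span_pair]

theorem mem_ASigma_iff_exists_zmod_smul {x y g : M} :
    g ∈ ASigma x y ↔ ∃ c : ZMod n, c • x = g ∨ c • y = g ∨ c • (x + y) = g := by
  simp only [ASigma, Set.mem_union, SetLike.mem_coe,
    AddSubgroup.mem_zmultiples_iff_exists_zmod_smul (n := n), ← exists_or, or_assoc]

end ZModModule

theorem stmt2 :
    let G := ZMod 3 × ZMod 3
    let x : G := (1, 0)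
    let y : G := (0, 1)
    (AddSubgroup.closure {x, y} = ⊤) ∧
    (AddSubgroup.closure {x, x + y} = (⊤ : AddSubgroup G)) ∧
    (AddSubgroup.closure {y, x + 2 • y} = (⊤ : AddSubgroup G)) ∧
    (AddSubgroup.closure {y, x + y} = (⊤ : AddSubgroup G)) ∧
    ASigma x y ∩ ASigma x (x + y) ∩ ASigma y (x + 2 • y) ∩ ASigma y (x + y)
      = {(0 : G)} := by
  dsimp only
  simp only [AddSubgroup.closure_pair_eq_top_iff_zmod (n := 3), Set.ext_iff, Set.mem_inter_iff,
    mem_ASigma_iff_exists_zmod_smul (n := 3), Set.mem_singleton_iff]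
  refine ⟨?_, ?_, ?_, ?_, ?_⟩ <;> decide
end

section
/- Let G = C₃ × C₃. For any two generating pairs (x₁,y₁) and (x₂,y₂) of G, the intersection Σ(x₁,y₁) ∩ Σ(x₂,y₂) contains a non-identity element. In particular, C₃ × C₃ is not a Beauville group. -/
lemma AddSubgroup.zmod_smul_mem_zmultiples {G : Type*} [AddCommGroup G] {n : ℕ}
    [Module (ZMod n) G] (c : ZMod n) (x : G) : c • x ∈ zmultiples x := by
  rw [← ZMod.intCast_zmod_cast c, Int.cast_smul_eq_zsmul]
  exact zsmul_mem_zmultiples x _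

lemma AddSubgroup.notMem_zmultiples_of_closure_pair_eq_top {G : Type*} [AddGroup G]
    (hG : ¬IsAddCyclic G) {x y : G} (h : closure {x, y} = ⊤) : y ∉ zmultiples x := by
  intro hy
  refine hG (isAddCyclic_iff_exists_zmultiples_eq_top.mpr ⟨x, top_unique ?_⟩)
  rw [← h, closure_le]
  exact Set.insert_subset (mem_zmultiples x) (Set.singleton_subset_iff.mpr hy)

section ASigma

variable {G : Type*} [AddCommGroup G]

lemma left_mem_ASigma (x y : G) : x ∈ ASigma x y :=
  Or.inl (Or.inl (AddSubgroup.mem_zmultiples x))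

lemma right_mem_ASigma (x y : G) : y ∈ ASigma x y :=
  Or.inl (Or.inr (AddSubgroup.mem_zmultiples y))

lemma mem_ASigma_or_eq_sub_or_eq_sub [Module (ZMod 3) G] {x y g : G}
    (hg : g ∈ AddSubgroup.closure {x, y}) : g ∈ ASigma x y ∨ g = x - y ∨ g = y - x := by
  obtain ⟨m, n, rfl⟩ := AddSubgroup.mem_closure_pair.mp hg
  rw [← Int.cast_smul_eq_zsmul (ZMod 3) m, ← Int.cast_smul_eq_zsmul (ZMod 3) n]
  generalize (m : ZMod 3) = a, (n : ZMod 3) = b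
  by_cases ha : a = 0
  · subst ha
    exact Or.inl (Or.inl (Or.inr (by simpa using AddSubgroup.zmod_smul_mem_zmultiples b y)))
  by_cases hb : b = 0
  · subst hb
    exact Or.inl (Or.inl (Or.inl (by simpa using AddSubgroup.zmod_smul_mem_zmultiples a x)))
  by_cases hab : a = b
  · subst hab
    exact Or.inl (Or.inr (by simpa [smul_add] using AddSubgroup.zmod_smul_mem_zmultiples a (x + y)))
  have hab' : a = 1 ∧ b = -1 ∨ a = -1 ∧ b = 1 := by revert a b; decide
  rcases hab' with ⟨rfl, rfl⟩ | ⟨rfl, rfl⟩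
  · simp [sub_eq_add_neg]
  · simp [sub_eq_add_neg, add_comm]

theorem exists_ne_zero_mem_ASigma_inter [Module (ZMod 3) G] (hG : ¬IsAddCyclic G)
    {x₁ y₁ x₂ y₂ : G} (h₁ : AddSubgroup.closure {x₁, y₁} = ⊤)
    (h₂ : AddSubgroup.closure {x₂, y₂} = ⊤) :
    ∃ g : G, g ≠ 0 ∧ g ∈ ASigma x₁ y₁ ∩ ASigma x₂ y₂ := by
  have hy₂ : y₂ ∉ AddSubgroup.zmultiples x₂ :=
    AddSubgroup.notMem_zmultiples_of_closure_pair_eq_top hG h₂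
  have hx₂ : x₂ ∉ AddSubgroup.zmultiples y₂ :=
    AddSubgroup.notMem_zmultiples_of_closure_pair_eq_top hG (Set.pair_comm x₂ y₂ ▸ h₂)
  by_cases hx : x₂ ∈ ASigma x₁ y₁
  · exact ⟨x₂, fun h ↦ hx₂ (h ▸ zero_mem _), hx, left_mem_ASigma x₂ y₂⟩
  by_cases hy : y₂ ∈ ASigma x₁ y₁
  · exact ⟨y₂, fun h ↦ hy₂ (h ▸ zero_mem _), hy, right_mem_ASigma x₂ y₂⟩
  have hx' := (mem_ASigma_or_eq_sub_or_eq_sub (h₁ ▸ AddSubgroup.mem_top x₂)).resolve_left hx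
  have hy' := (mem_ASigma_or_eq_sub_or_eq_sub (h₁ ▸ AddSubgroup.mem_top y₂)).resolve_left hy
  have hxy : y₂ = x₂ ∨ y₂ = -x₂ := by
    rcases hx' with rfl | rfl <;> rcases hy' with rfl | rfl <;> simp
  rcases hxy with rfl | rfl
  · exact (hy₂ (AddSubgroup.mem_zmultiples y₂)).elim
  · exact (hy₂ (neg_mem (AddSubgroup.mem_zmultiples x₂))).elim

end ASigma

theorem stmt3 (x₁ y₁ x₂ y₂ : ZMod 3 × ZMod 3)
    (h₁ : AddSubgroup.closure {x₁, y₁} = ⊤)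
    (h₂ : AddSubgroup.closure {x₂, y₂} = ⊤) :
    ∃ g : ZMod 3 × ZMod 3, g ≠ 0 ∧ g ∈ ASigma x₁ y₁ ∩ ASigma x₂ y₂ := by
  have hG : ¬IsAddCyclic (ZMod 3 × ZMod 3) := fun _ ↦ by
    simpa using coprime_card_of_isAddCyclic_prod (ZMod 3) (ZMod 3)
  exact exists_ne_zero_mem_ASigma_inter hG h₁ h₂
end

section
/- Let G = C₃ × C₃. For any three generating pairs (x₁,y₁), (x₂,y₂), (x₃,y₃) of G, the intersection Σ(x₁,y₁) ∩ Σ(x₂,y₂) ∩ Σ(x₃,y₃) contains a non-identity element. -/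
theorem AddSubgroup.exists_ne_zero_forall_notMem {G ι : Type*} [AddGroup G] [Finite G]
    [Fintype ι] (H : ι → AddSubgroup G) (h : ∑ i, (Nat.card (H i) - 1) < Nat.card G - 1) :
    ∃ g ≠ (0 : G), ∀ i, g ∉ H i := by
  classical
  have := Fintype.ofFinite G
  let nonzero (i : ι) : Finset G := (Finset.univ.filter (· ∈ H i)).erase 0
  have card_nonzero (i : ι) : (nonzero i).card = Nat.card (H i) - 1 := by
    rw [Finset.card_erase_of_mem (by simp), Nat.card_eq_fintype_card,
      Fintype.card_subtype]
  obtain ⟨g, hg, hg'⟩ := Finset.exists_mem_notMem_of_card_lt_card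
    (s := Finset.univ.biUnion nonzero) (t := Finset.univ.erase 0) <| calc
      _ ≤ ∑ i, (nonzero i).card := Finset.card_biUnion_le
      _ < (Finset.univ.erase (0 : G)).card := by
        simpa [card_nonzero, Finset.card_erase_of_mem, Nat.card_eq_fintype_card] using h
  refine ⟨g, Finset.ne_of_mem_erase hg, fun i hi => hg' ?_⟩
  simpa [nonzero, Finset.ne_of_mem_erase hg] using ⟨i, hi⟩

theorem ZMod.three_eq_zero_or_eq_or_eq_neg (a b : ZMod 3) :
    a = 0 ∨ b = 0 ∨ b = a ∨ b = -a := by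
  revert a b; decide

theorem ZMod.smul_mem_zmultiples {n : ℕ} {G : Type*} [AddCommGroup G] [Module (ZMod n) G]
    (a : ZMod n) (x : G) : a • x ∈ AddSubgroup.zmultiples x :=
  ⟨a.cast, by simp only [← Int.cast_smul_eq_zsmul (ZMod n), ZMod.intCast_zmod_cast]⟩

theorem mem_ASigma_or_mem_zmultiples_sub {G : Type*} [AddCommGroup G] [Module (ZMod 3) G]
    {x y : G} (h : AddSubgroup.closure {x, y} = ⊤) (g : G) :
    g ∈ ASigma x y ∨ g ∈ AddSubgroup.zmultiples (x - y) := by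
  obtain ⟨m, n, rfl⟩ := AddSubgroup.mem_closure_pair.mp (h ▸ AddSubgroup.mem_top g)
  rw [← Int.cast_smul_eq_zsmul (ZMod 3) m, ← Int.cast_smul_eq_zsmul (ZMod 3) n]
  generalize (m : ZMod 3) = a
  generalize (n : ZMod 3) = b
  rcases ZMod.three_eq_zero_or_eq_or_eq_neg a b with rfl | rfl | rfl | rfl
  · rw [zero_smul, zero_add]
    exact .inl (.inl (.inr (ZMod.smul_mem_zmultiples _ _)))
  · rw [zero_smul, add_zero]
    exact .inl (.inl (.inl (ZMod.smul_mem_zmultiples _ _)))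
  · rw [← smul_add]
    exact .inl (.inr (ZMod.smul_mem_zmultiples _ _))
  · rw [neg_smul, ← sub_eq_add_neg, ← smul_sub]
    exact .inr (ZMod.smul_mem_zmultiples _ _)

theorem ZMod.card_zmultiples_le {n : ℕ} [NeZero n] {G : Type*} [AddCommGroup G]
    [Module (ZMod n) G] (x : G) : Nat.card (AddSubgroup.zmultiples x) ≤ n := by
  rw [Nat.card_zmultiples]
  refine Nat.le_of_dvd (NeZero.pos n) (addOrderOf_dvd_of_nsmul_eq_zero ?_)
  rw [← Nat.cast_smul_eq_nsmul (ZMod n), ZMod.natCast_self, zero_smul]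

theorem stmt4 (x₁ y₁ x₂ y₂ x₃ y₃ : ZMod 3 × ZMod 3)
    (h₁ : AddSubgroup.closure {x₁, y₁} = ⊤)
    (h₂ : AddSubgroup.closure {x₂, y₂} = ⊤)
    (h₃ : AddSubgroup.closure {x₃, y₃} = ⊤) :
    ∃ g : ZMod 3 × ZMod 3, g ≠ 0 ∧
      g ∈ ASigma x₁ y₁ ∩ ASigma x₂ y₂ ∩ ASigma x₃ y₃ := by
  let H : Fin 3 → AddSubgroup (ZMod 3 × ZMod 3) :=
    ![.zmultiples (x₁ - y₁), .zmultiples (x₂ - y₂), .zmultiples (x₃ - y₃)]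
  have card_H (i : Fin 3) : Nat.card (H i) ≤ 3 := by
    fin_cases i <;> exact ZMod.card_zmultiples_le _
  obtain ⟨g, hg, hgH⟩ := AddSubgroup.exists_ne_zero_forall_notMem H <| calc
    ∑ i, (Nat.card (H i) - 1) ≤ ∑ _i : Fin 3, 2 := by
      gcongr with i; exact Nat.sub_le_sub_right (card_H i) 1
    _ < Nat.card (ZMod 3 × ZMod 3) - 1 := by simp
  have mem_ASigma {x y : ZMod 3 × ZMod 3} (h : AddSubgroup.closure {x, y} = ⊤)
      (hg : g ∉ AddSubgroup.zmultiples (x - y)) : g ∈ ASigma x y :=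
    (mem_ASigma_or_mem_zmultiples_sub h g).resolve_right hg
  exact ⟨g, hg, ⟨mem_ASigma h₁ (hgH 0), mem_ASigma h₂ (hgH 1)⟩, mem_ASigma h₃ (hgH 2)⟩
end

section
/- Let G be a finite group, N ⊴ G, and π : G → G/N the quotient map. Suppose x₁, y₁, ..., xₙ, yₙ ∈ G are such that each pair (xᵢ, yᵢ) generates G, the elements x₁, y₁, and x₁y₁ each satisfy ⟨g⟩ ∩ N = {e}, and the images (π(xᵢ), π(yᵢ)) satisfy ⋂ᵢ Σ_{G/N}(π(xᵢ), π(yᵢ)) = {e}. Then ⋂ᵢ Σ_G(xᵢ, yᵢ) = {e}. -/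
/-! An element of `⋂ᵢ Σ_G(xᵢ, yᵢ)` maps into `⋂ᵢ Σ_{G/N}(π xᵢ, π yᵢ) = {e}`, so it lies in `N`.
Being in `Σ_G(x₁, y₁)`, it is conjugate to an element of `⟨x₁⟩`, `⟨y₁⟩` or `⟨x₁y₁⟩`; that conjugate
still lies in the normal subgroup `N`, hence is trivial since these cyclic groups meet `N`
trivially. -/

def BSigma {G : Type*} [Group G] (x y : G) : Set G :=
  ⋃ k : G, (fun g => k⁻¹ * g * k) ''
    ((Subgroup.zpowers x : Set G) ∪ (Subgroup.zpowers y : Set G) ∪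
      (Subgroup.zpowers (x * y) : Set G))

section BSigma

variable {G : Type*} [Group G]

lemma one_mem_BSigma (x y : G) : (1 : G) ∈ BSigma x y :=
  Set.mem_iUnion.2 ⟨1, 1, Or.inl (Or.inl (Subgroup.one_mem _)), by simp⟩

lemma map_mem_BSigma {H : Type*} [Group H] (f : G →* H) {x y g : G} (hg : g ∈ BSigma x y) :
    f g ∈ BSigma (f x) (f y) := by
  obtain ⟨k, a, ha, rfl⟩ := Set.mem_iUnion.1 hg
  refine Set.mem_iUnion.2 ⟨f k, f a, ?_, by simp⟩
  rcases ha with (⟨m, rfl⟩ | ⟨m, rfl⟩) | ⟨m, rfl⟩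
  · exact Or.inl (Or.inl ⟨m, (map_zpow f x m).symm⟩)
  · exact Or.inl (Or.inr ⟨m, (map_zpow f y m).symm⟩)
  · exact Or.inr ⟨m, by rw [← map_mul, map_zpow]⟩

lemma eq_one_of_mem_BSigma_of_mem_normal {N : Subgroup G} [N.Normal] {x y g : G}
    (hx : Subgroup.zpowers x ⊓ N = ⊥) (hy : Subgroup.zpowers y ⊓ N = ⊥)
    (hxy : Subgroup.zpowers (x * y) ⊓ N = ⊥) (hg : g ∈ BSigma x y) (hgN : g ∈ N) :
    g = 1 := by
  obtain ⟨k, a, ha, rfl⟩ := Set.mem_iUnion.1 hg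
  have haN : a ∈ N := by
    simpa [mul_assoc] using Subgroup.Normal.conj_mem ‹N.Normal› _ hgN k
  suffices a = 1 by simp [this]
  rcases ha with (ha | ha) | ha
  · exact Subgroup.disjoint_def.1 (disjoint_iff.2 hx) ha haN
  · exact Subgroup.disjoint_def.1 (disjoint_iff.2 hy) ha haN
  · exact Subgroup.disjoint_def.1 (disjoint_iff.2 hxy) ha haN

end BSigma

theorem stmt10_general {G : Type*} [Group G] (N : Subgroup G) [N.Normal]
    (n : ℕ) (hn : 0 < n) (x y : Fin n → G)
    (hx : Subgroup.zpowers (x ⟨0, hn⟩) ⊓ N = ⊥)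
    (hy : Subgroup.zpowers (y ⟨0, hn⟩) ⊓ N = ⊥)
    (hxy : Subgroup.zpowers (x ⟨0, hn⟩ * y ⟨0, hn⟩) ⊓ N = ⊥)
    (hquot : ⋂ i, BSigma ((QuotientGroup.mk' N) (x i)) ((QuotientGroup.mk' N) (y i))
      = {(1 : G ⧸ N)}) :
    ⋂ i, BSigma (x i) (y i) = {(1 : G)} := by
  refine Set.eq_singleton_iff_unique_mem.2
    ⟨Set.mem_iInter.2 fun i => one_mem_BSigma _ _, fun g hg => ?_⟩
  have hgi := Set.mem_iInter.1 hg
  have hgN : g ∈ N := by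
    rw [← QuotientGroup.eq_one_iff, ← Set.mem_singleton_iff, ← hquot]
    exact Set.mem_iInter.2 fun i => map_mem_BSigma (QuotientGroup.mk' N) (hgi i)
  exact eq_one_of_mem_BSigma_of_mem_normal hx hy hxy (hgi ⟨0, hn⟩) hgN

theorem stmt10 {G : Type*} [Group G] [Finite G] (N : Subgroup G) [N.Normal]
    (n : ℕ) (hn : 0 < n) (x y : Fin n → G)
    (hgen : ∀ i, Subgroup.closure {x i, y i} = ⊤)
    (hx : Subgroup.zpowers (x ⟨0, hn⟩) ⊓ N = ⊥)
    (hy : Subgroup.zpowers (y ⟨0, hn⟩) ⊓ N = ⊥)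
    (hxy : Subgroup.zpowers (x ⟨0, hn⟩ * y ⟨0, hn⟩) ⊓ N = ⊥)
    (hquot : ⋂ i, BSigma ((QuotientGroup.mk' N) (x i)) ((QuotientGroup.mk' N) (y i))
      = {(1 : G ⧸ N)}) :
    ⋂ i, BSigma (x i) (y i) = {(1 : G)} :=
  stmt10_general N n hn x y hx hy hxy hquot
end

section
/- Let G and H be finite groups with coprime orders, and let p = (g₁,h₁), q = (g₂,h₂) ∈ G × H. Then Σ_{G×H}(p,q) ∩ (G × {e}) = Σ_G(g₁,g₂) × {e} and Σ_{G×H}(p,q) ∩ ({e} × H) = {e} × Σ_H(h₁,h₂). -/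
open Subgroup

section

variable {G H K : Type*} [Group G] [Group H] [Group K]

lemma image_BSigma_subset (f : G →* K) {x y : G} {x' y' : K}
    (hx : f '' zpowers x ⊆ zpowers x') (hy : f '' zpowers y ⊆ zpowers y')
    (hxy : f '' zpowers (x * y) ⊆ zpowers (x' * y')) :
    f '' BSigma x y ⊆ BSigma x' y' := by
  rintro _ ⟨_, hc, rfl⟩
  rw [BSigma, Set.mem_iUnion] at hc
  obtain ⟨k, c, hc, rfl⟩ := hc
  rw [BSigma, Set.mem_iUnion]
  refine ⟨f k, f c, ?_, by simp only [map_mul, map_inv]⟩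
  rcases hc with (hc | hc) | hc
  · exact Or.inl (Or.inl (hx ⟨c, hc, rfl⟩))
  · exact Or.inl (Or.inr (hy ⟨c, hc, rfl⟩))
  · exact Or.inr (hxy ⟨c, hc, rfl⟩)

lemma image_BSigma_subset_BSigma_map (f : G →* K) (x y : G) :
    f '' BSigma x y ⊆ BSigma (f x) (f y) := by
  have hz (z : G) : f '' zpowers z ⊆ zpowers (f z) := by
    rw [← coe_map, MonoidHom.map_zpowers]
  exact image_BSigma_subset f (hz x) (hz y) (map_mul f x y ▸ hz (x * y))

lemma exists_zpow_eq_and_zpow_eq_one (hco : Nat.Coprime (Nat.card G) (Nat.card H))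
    (x : G) (y : H) (n : ℤ) : ∃ m : ℤ, x ^ m = x ^ n ∧ y ^ m = 1 := by
  obtain ⟨u, v, huv⟩ := Nat.isCoprime_iff_coprime.mpr hco
  have hx : x ^ (Nat.card G : ℤ) = 1 := by rw [zpow_natCast, pow_card_eq_one']
  have hy : y ^ (Nat.card H : ℤ) = 1 := by rw [zpow_natCast, pow_card_eq_one']
  refine ⟨n * v * Nat.card H, ?_, ?_⟩
  · rw [show n * v * Nat.card H = n + Nat.card G * (-(n * u)) by linear_combination n * huv,
      zpow_add, zpow_mul, hx, one_zpow, mul_one]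
  · rw [mul_comm, zpow_mul, hy, one_zpow]

lemma image_inl_zpowers_fst_subset (hco : Nat.Coprime (Nat.card G) (Nat.card H))
    (z : G × H) : MonoidHom.inl G H '' zpowers z.1 ⊆ zpowers z := by
  rintro _ ⟨_, ⟨n, rfl⟩, rfl⟩
  obtain ⟨m, hm₁, hm₂⟩ := exists_zpow_eq_and_zpow_eq_one hco z.1 z.2 n
  exact ⟨m, Prod.ext hm₁ hm₂⟩

lemma image_inr_zpowers_snd_subset (hco : Nat.Coprime (Nat.card G) (Nat.card H))
    (z : G × H) : MonoidHom.inr G H '' zpowers z.2 ⊆ zpowers z := by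
  rintro _ ⟨_, ⟨n, rfl⟩, rfl⟩
  obtain ⟨m, hm₂, hm₁⟩ := exists_zpow_eq_and_zpow_eq_one hco.symm z.2 z.1 n
  exact ⟨m, Prod.ext hm₁ hm₂⟩

lemma BSigma_inter_snd_eq_one (hco : Nat.Coprime (Nat.card G) (Nat.card H)) (p q : G × H) :
    BSigma p q ∩ {r | r.2 = 1} = (fun g => ((g, 1) : G × H)) '' BSigma p.1 q.1 := by
  refine Set.Subset.antisymm ?_ ?_
  · rintro r ⟨hr, hr₂ : r.2 = 1⟩
    have := image_BSigma_subset_BSigma_map (MonoidHom.fst G H) p q ⟨r, hr, rfl⟩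
    exact ⟨r.1, this, Prod.ext rfl hr₂.symm⟩
  · have := image_BSigma_subset (MonoidHom.inl G H) (image_inl_zpowers_fst_subset hco p)
      (image_inl_zpowers_fst_subset hco q) (image_inl_zpowers_fst_subset hco (p * q))
    rintro _ ⟨g, hg, rfl⟩
    exact ⟨this ⟨g, hg, rfl⟩, rfl⟩

lemma BSigma_inter_fst_eq_one (hco : Nat.Coprime (Nat.card G) (Nat.card H)) (p q : G × H) :
    BSigma p q ∩ {r | r.1 = 1} = (fun h => ((1, h) : G × H)) '' BSigma p.2 q.2 := by
  refine Set.Subset.antisymm ?_ ?_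
  · rintro r ⟨hr, hr₁ : r.1 = 1⟩
    have := image_BSigma_subset_BSigma_map (MonoidHom.snd G H) p q ⟨r, hr, rfl⟩
    exact ⟨r.2, this, Prod.ext hr₁.symm rfl⟩
  · have := image_BSigma_subset (MonoidHom.inr G H) (image_inr_zpowers_snd_subset hco p)
      (image_inr_zpowers_snd_subset hco q) (image_inr_zpowers_snd_subset hco (p * q))
    rintro _ ⟨h, hh, rfl⟩
    exact ⟨this ⟨h, hh, rfl⟩, rfl⟩

end

theorem stmt11_general {G H : Type*} [Group G] [Group H]
    (hco : Nat.Coprime (Nat.card G) (Nat.card H))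
    (g₁ g₂ : G) (h₁ h₂ : H) :
    BSigma (g₁, h₁) (g₂, h₂) ∩ {p : G × H | p.2 = 1}
        = (fun g => ((g, 1) : G × H)) '' BSigma g₁ g₂ ∧
    BSigma (g₁, h₁) (g₂, h₂) ∩ {p : G × H | p.1 = 1}
        = (fun h => ((1, h) : G × H)) '' BSigma h₁ h₂ :=
  ⟨BSigma_inter_snd_eq_one hco _ _, BSigma_inter_fst_eq_one hco _ _⟩

theorem stmt11 {G H : Type*} [Group G] [Group H] [Finite G] [Finite H]
    (hco : Nat.Coprime (Nat.card G) (Nat.card H))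
    (g₁ g₂ : G) (h₁ h₂ : H) :
    BSigma (g₁, h₁) (g₂, h₂) ∩ {p : G × H | p.2 = 1}
        = (fun g => ((g, 1) : G × H)) '' BSigma g₁ g₂ ∧
    BSigma (g₁, h₁) (g₂, h₂) ∩ {p : G × H | p.1 = 1}
        = (fun h => ((1, h) : G × H)) '' BSigma h₁ h₂ :=
  stmt11_general hco g₁ g₂ h₁ h₂
end

section
/- Let G = Cₙ × Cₙ where n = 3^k with k ≥ 1. Then G has exactly 8 elements of order 3, and for every generating pair (x,y) of G, the set Σ(x,y) contains exactly 6 elements of order 3. -/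
lemma aux_nz (j : ℕ) : NeZero (3 ^ (j+1)) := ⟨by positivity⟩

lemma aux_nat1 (j n : ℕ) : 3^(j+1) ∣ 3^j * n ↔ 3 ∣ n := by
  rw [pow_succ, mul_comm ((3:ℕ)^j) 3, mul_comm ((3:ℕ)^j) n]
  exact Nat.mul_dvd_mul_iff_right (by positivity)

lemma aux_nat2 (j n : ℕ) : 3^(j+1) ∣ 3 * n ↔ 3^j ∣ n := by
  rw [pow_succ, mul_comm ((3:ℕ)^j) 3]
  exact Nat.mul_dvd_mul_iff_left (by norm_num)

lemma aux_smul (j m : ℕ) (a : ZMod (3^(j+1))) :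
    m • a = 0 ↔ 3^(j+1) ∣ m * a.val := by
  haveI := aux_nz j
  conv_lhs => rw [nsmul_eq_mul, ← ZMod.natCast_zmod_val a, ← Nat.cast_mul,
    ZMod.natCast_eq_zero_iff]

lemma aux_L1 (j : ℕ) (a : ZMod (3^(j+1))) : (3^j) • a = 0 ↔ 3 ∣ a.val := by
  rw [aux_smul, aux_nat1]

lemma aux_exp (j : ℕ) (a : ZMod (3^(j+1))) : (3^(j+1)) • a = 0 := by
  rw [aux_smul]; exact Dvd.dvd.mul_right dvd_rfl _

lemma aux_L2 (j : ℕ) (a : ZMod (3^(j+1))) :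
    3 • a = 0 ↔ a = 0 ∨ a = ((3^j : ℕ) : ZMod (3^(j+1))) ∨ a = 2 * ((3^j : ℕ) : ZMod (3^(j+1))) := by
  haveI := aux_nz j
  constructor
  · intro h
    rw [aux_smul, aux_nat2] at h
    obtain ⟨c, hc⟩ := h
    have hlt : a.val < 3^(j+1) := ZMod.val_lt a
    have hp : (3:ℕ)^(j+1) = 3^j * 3 := pow_succ 3 j
    have hc3 : c < 3 := by
      by_contra hge
      push_neg at hge
      have : 3^j * 3 ≤ 3^j * c := Nat.mul_le_mul_left _ hge
      omega
    have ha : a = ((3^j * c : ℕ) : ZMod (3^(j+1))) := by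
      rw [← hc, ZMod.natCast_zmod_val]
    interval_cases c
    · left; simpa using ha
    · right; left; simpa using ha
    · right; right; rw [ha]; push_cast; ring
  · rintro (rfl | rfl | rfl)
    · simp
    · rw [show (3:ℕ) • ((3^j : ℕ) : ZMod (3^(j+1))) = ((3 * 3^j : ℕ) : ZMod (3^(j+1))) by push_cast; ring]
      rw [ZMod.natCast_eq_zero_iff, aux_nat2]
    · rw [show (3:ℕ) • (2 * ((3^j : ℕ) : ZMod (3^(j+1)))) = ((3 * (2 * 3^j) : ℕ) : ZMod (3^(j+1))) by push_cast; ring]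
      rw [ZMod.natCast_eq_zero_iff, aux_nat2]
      exact Dvd.dvd.mul_left dvd_rfl 2

lemma aux_pow_lt (j : ℕ) : 2 * 3^j < 3^(j+1) := by
  have h1 : (1:ℕ) ≤ 3^j := Nat.one_le_pow _ _ (by norm_num)
  rw [pow_succ]; omega

lemma aux_t_ne (j : ℕ) : ((3^j : ℕ) : ZMod (3^(j+1))) ≠ 0 := by
  rw [Ne, ZMod.natCast_eq_zero_iff]
  intro h
  have := Nat.le_of_dvd (by positivity) h
  have := aux_pow_lt j
  have h1 : (1:ℕ) ≤ 3^j := Nat.one_le_pow _ _ (by norm_num)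
  omega

lemma aux_2t_ne (j : ℕ) : 2 * ((3^j : ℕ) : ZMod (3^(j+1))) ≠ 0 := by
  rw [show 2 * ((3^j : ℕ) : ZMod (3^(j+1))) = ((2 * 3^j : ℕ) : ZMod (3^(j+1))) by push_cast; ring]
  rw [Ne, ZMod.natCast_eq_zero_iff]
  intro h
  have := Nat.le_of_dvd (by positivity) h
  have := aux_pow_lt j
  omega

lemma aux_t_ne_2t (j : ℕ) : ((3^j : ℕ) : ZMod (3^(j+1))) ≠ 2 * ((3^j : ℕ) : ZMod (3^(j+1))) := by
  intro h
  exact aux_t_ne j (by linear_combination -h)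

lemma ord3_iff {A : Type*} [AddGroup A] (g : A) :
    addOrderOf g = 3 ↔ 3 • g = 0 ∧ g ≠ 0 := by
  haveI : Fact (Nat.Prime 3) := ⟨by norm_num⟩
  constructor
  · intro h
    refine ⟨?_, ?_⟩
    · rw [← h]; exact addOrderOf_nsmul_eq_zero g
    · intro h0; rw [h0] at h; simp at h
  · rintro ⟨h1, h2⟩
    exact addOrderOf_eq_prime h1 h2

section part2
variable {j : ℕ}
local notation "G" => ZMod (3^(j+1)) × ZMod (3^(j+1))

lemma aux_expG (g : G) : (3^(j+1)) • g = 0 := by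
  obtain ⟨a, b⟩ := g
  rw [Prod.smul_mk, Prod.mk_eq_zero]
  exact ⟨aux_exp j a, aux_exp j b⟩

lemma aux_cast3 (g : G) : (3:ℤ) • g = (3:ℕ) • g := by
  rw [show ((3:ℤ)) = ((3:ℕ):ℤ) by norm_num, natCast_zsmul]

lemma aux_ordz (z : G) (hz : (3^j) • z ≠ 0) : addOrderOf z = 3^(j+1) := by
  have hd : addOrderOf z ∣ 3^(j+1) := addOrderOf_dvd_of_nsmul_eq_zero (aux_expG z)
  obtain ⟨i, hi, hdi⟩ := (Nat.dvd_prime_pow (by norm_num)).mp hd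
  rcases Nat.lt_or_ge i (j+1) with hlt | hge
  · exfalso
    apply hz
    apply addOrderOf_dvd_iff_nsmul_eq_zero.mp
    rw [hdi]
    exact pow_dvd_pow 3 (by omega)
  · rw [hdi]; congr 1; omega

lemma aux_D (z : G) (hz : (3^j) • z ≠ 0) :
    {g ∈ (AddSubgroup.zmultiples z : Set G) | addOrderOf g = 3} =
      {(3^j) • z, -((3^j) • z)} := by
  haveI : Fact (Nat.Prime 3) := ⟨by norm_num⟩
  have hord : addOrderOf z = 3^(j+1) := aux_ordz z hz
  have h3w : (3:ℕ) • ((3^j) • z) = 0 := by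
    rw [← mul_nsmul', ← pow_succ']; exact aux_expG z
  have hordw : addOrderOf ((3^j) • z) = 3 := addOrderOf_eq_prime h3w hz
  have hzz : ((3:ℤ)^j) • z = (3^j:ℕ) • z := by
    rw [show ((3:ℤ)^j) = ((3^j:ℕ):ℤ) by push_cast; ring, natCast_zsmul]
  have h3wz : (3:ℤ) • ((3^j) • z) = 0 := by rw [aux_cast3]; exact h3w
  ext g
  simp only [Set.mem_setOf_eq, Set.mem_insert_iff, Set.mem_singleton_iff]
  constructor
  · rintro ⟨hmem, hg3⟩
    obtain ⟨n, rfl⟩ := AddSubgroup.mem_zmultiples_iff.mp hmem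
    have h3g : (3:ℤ) • (n • z) = 0 := by
      have h0 := addOrderOf_nsmul_eq_zero (n • z)
      rw [hg3] at h0
      rw [aux_cast3]
      exact h0
    rw [smul_smul] at h3g
    have hdvd : ((addOrderOf z : ℕ) : ℤ) ∣ 3 * n := addOrderOf_dvd_iff_zsmul_eq_zero.mpr h3g
    rw [hord] at hdvd
    have hdvd2 : (3:ℤ)^j ∣ n := by
      rw [show (((3:ℕ)^(j+1) : ℕ) : ℤ) = 3 * (3:ℤ)^j by push_cast [pow_succ]; ring] at hdvd
      exact (mul_dvd_mul_iff_left (by norm_num : (3:ℤ) ≠ 0)).mp hdvd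
    obtain ⟨c, hc⟩ := hdvd2
    have hgw : n • z = c • ((3^j:ℕ) • z) := by
      rw [hc, mul_comm, mul_smul, hzz]
    have hmod : n • z = (c % 3) • ((3^j:ℕ) • z) := by
      rw [hgw]
      conv_lhs => rw [show c = 3 * (c / 3) + c % 3 from (Int.mul_ediv_add_emod c 3).symm]
      rw [add_smul, mul_comm, mul_smul, h3wz, smul_zero, zero_add]
    have hr0 : 0 ≤ c % 3 := Int.emod_nonneg c (by norm_num)
    have hr3 : c % 3 < 3 := Int.emod_lt_of_pos c (by norm_num)
    interval_cases h : c % 3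
    · exfalso
      rw [hmod, zero_zsmul] at hg3
      simp at hg3
    · left; rw [hmod, one_zsmul]
    · right
      rw [hmod]
      have h2 := h3wz
      rw [show (3:ℤ) = 2 + 1 by norm_num, add_smul, one_zsmul] at h2
      rw [eq_neg_iff_add_eq_zero]
      exact h2
  · rintro (rfl | rfl)
    · exact ⟨by
        rw [← hzz]
        exact AddSubgroup.zsmul_mem_zmultiples z _, hordw⟩
    · exact ⟨by
        apply AddSubgroup.neg_mem
        rw [← hzz]
        exact AddSubgroup.zsmul_mem_zmultiples z _, by rw [addOrderOf_neg]; exact hordw⟩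
end part2

section H3
local notation "H" => ZMod 3 × ZMod 3

lemma aux_H3 (h : H) : (3:ℕ) • h = 0 := by
  obtain ⟨a, b⟩ := h
  rw [Prod.smul_mk, Prod.mk_eq_zero]
  constructor <;> · rw [nsmul_eq_mul]; rw [show ((3:ℕ) : ZMod 3) = 0 by decide]; ring

lemma aux_H3z (h : H) : (3:ℤ) • h = 0 := by
  rw [show ((3:ℤ)) = ((3:ℕ):ℤ) by norm_num, natCast_zsmul]; exact aux_H3 h

lemma aux_cardH : Nat.card H = 9 := by
  rw [Nat.card_eq_fintype_card, Fintype.card_prod, ZMod.card]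

lemma aux_F (h0 h1 : H) (htop : AddSubgroup.closure {h0, h1} = ⊤)
    (hmem : h0 ∈ AddSubgroup.zmultiples h1) : False := by
  have h1top : AddSubgroup.zmultiples h1 = ⊤ := by
    rw [eq_top_iff, ← htop]
    refine (AddSubgroup.closure_le _).mpr ?_
    intro g hg
    rcases hg with hg | hg
    · rw [hg]; exact hmem
    · rw [hg]; exact AddSubgroup.mem_zmultiples h1
  have hcard : Nat.card (AddSubgroup.zmultiples h1) = 9 := by
    rw [h1top, ← aux_cardH]
    exact Nat.card_congr AddSubgroup.topEquiv.toEquiv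
  rw [Nat.card_zmultiples] at hcard
  have : addOrderOf h1 ∣ 3 := addOrderOf_dvd_of_nsmul_eq_zero (aux_H3 h1)
  have := Nat.le_of_dvd (by norm_num) this
  omega

lemma aux_indepH1 (p q : H) (htop : AddSubgroup.closure {p, q} = ⊤) (a b : ℤ)
    (hab : a • p + b • q = 0) : (3:ℤ) ∣ a := by
  have h3 : ∀ (c : ℤ) (h : H), c • h = (c % 3) • h := by
    intro c h
    conv_lhs => rw [show c = 3 * (c / 3) + c % 3 from (Int.mul_ediv_add_emod c 3).symm]
    rw [add_smul, mul_comm, mul_smul, aux_H3z, smul_zero, zero_add]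
  by_contra hna
  apply aux_F p q htop
  have hr0 : 0 ≤ a % 3 := Int.emod_nonneg a (by norm_num)
  have hr3 : a % 3 < 3 := Int.emod_lt_of_pos a (by norm_num)
  have hne : a % 3 ≠ 0 := fun h => hna (Int.dvd_of_emod_eq_zero h)
  rw [h3 a p] at hab
  interval_cases h : a % 3
  · exact absurd rfl hne
  · rw [one_zsmul] at hab
    rw [show p = (-b) • q by rw [neg_smul, eq_neg_iff_add_eq_zero]; exact hab]
    exact AddSubgroup.zsmul_mem_zmultiples q _
  · have e1 : (4:ℤ) • p + (2*b) • q = 0 := by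
      simp only [zsmul_eq_mul] at hab ⊢
      push_cast at hab ⊢
      linear_combination 2 * hab
    have e2 : (4:ℤ) • p = p := by
      rw [show (4:ℤ) = 3 + 1 by norm_num, add_smul, one_zsmul, aux_H3z, zero_add]
    rw [e2] at e1
    rw [show p = (-(2*b)) • q by rw [neg_smul, eq_neg_iff_add_eq_zero]; exact e1]
    exact AddSubgroup.zsmul_mem_zmultiples q _

lemma aux_indepH (p q : H) (htop : AddSubgroup.closure {p, q} = ⊤) (a b : ℤ)
    (hab : a • p + b • q = 0) : (3:ℤ) ∣ a ∧ (3:ℤ) ∣ b := by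
  refine ⟨aux_indepH1 p q htop a b hab, aux_indepH1 q p ?_ b a (by rw [add_comm]; exact hab)⟩
  rw [Set.pair_comm]; exact htop
end H3

section PI
variable (j : ℕ)
local notation "G" => ZMod (3^(j+1)) × ZMod (3^(j+1))
local notation "H" => ZMod 3 × ZMod 3

noncomputable def auxc : ZMod (3^(j+1)) →+ ZMod 3 :=
  (ZMod.castHom (dvd_pow_self 3 (Nat.succ_ne_zero j)) (ZMod 3)).toAddMonoidHom

noncomputable def auxpi : (ZMod (3^(j+1)) × ZMod (3^(j+1))) →+ ZMod 3 × ZMod 3 :=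
  AddMonoidHom.prodMap (auxc j) (auxc j)

lemma auxc_zero (a : ZMod (3^(j+1))) : auxc j a = 0 ↔ 3 ∣ a.val := by
  haveI : NeZero (3^(j+1)) := ⟨by positivity⟩
  show ZMod.castHom (dvd_pow_self 3 (Nat.succ_ne_zero j)) (ZMod 3) a = 0 ↔ _
  rw [ZMod.castHom_apply, ← ZMod.natCast_val, ZMod.natCast_eq_zero_iff]

lemma auxc_surj : Function.Surjective (auxc j) := by
  intro b
  refine ⟨((b.val : ℕ) : ZMod (3^(j+1))), ?_⟩
  show ZMod.castHom (dvd_pow_self 3 (Nat.succ_ne_zero j)) (ZMod 3) _ = b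
  rw [map_natCast, ZMod.natCast_zmod_val]

lemma auxpi_surj : Function.Surjective (auxpi j) :=
  Function.Surjective.prodMap (auxc_surj j) (auxc_surj j)

lemma auxpi_zero (g : G) : auxpi j g = 0 ↔ auxc j g.1 = 0 ∧ auxc j g.2 = 0 := by
  obtain ⟨a, b⟩ := g
  show ((auxc j a, auxc j b) : H) = 0 ↔ _
  rw [Prod.mk_eq_zero]

lemma aux_htopH (x y : G) (hxy : AddSubgroup.closure {x, y} = ⊤) :
    AddSubgroup.closure {auxpi j x, auxpi j y} = ⊤ := by
  have h1 : ({auxpi j x, auxpi j y} : Set H) = (auxpi j) '' {x, y} := by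
    rw [Set.image_insert_eq, Set.image_singleton]
  rw [h1, ← AddMonoidHom.map_closure, hxy]
  rw [← AddMonoidHom.range_eq_map]
  exact AddMonoidHom.range_eq_top.mpr (auxpi_surj j)

lemma aux_mz (g : G) : (3^j) • g = 0 ↔ auxpi j g = 0 := by
  rw [auxpi_zero]
  obtain ⟨a, b⟩ := g
  rw [Prod.smul_mk, Prod.mk_eq_zero]
  simp only [aux_L1, auxc_zero]

lemma aux_indepG (x y : G) (htop : AddSubgroup.closure {x, y} = ⊤) (a b : ℤ)
    (h : a • ((3^j) • x) + b • ((3^j) • y) = 0) : (3:ℤ) ∣ a ∧ (3:ℤ) ∣ b := by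
  have h2 : (3^j) • (a • x + b • y) = 0 := by
    rw [smul_add, smul_comm ((3:ℕ)^j) a, smul_comm ((3:ℕ)^j) b]
    exact h
  have h3 : auxpi j (a • x + b • y) = 0 := (aux_mz j _).mp h2
  rw [map_add, map_zsmul, map_zsmul] at h3
  exact aux_indepH _ _ (aux_htopH j x y htop) a b h3
end PI


lemma aux_six {A : Type*} [AddCommGroup A] (u v : A)
    (key : ∀ a b : ℤ, ¬((3:ℤ) ∣ a ∧ (3:ℤ) ∣ b) → a • u + b • v ≠ 0) :
    (({u, -u} : Set A) ∪ {v, -v} ∪ {u + v, -(u + v)}).ncard = 6 := by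
  have keyne : ∀ (a b : ℤ) (p q : A),
      ¬((3:ℤ) ∣ a ∧ (3:ℤ) ∣ b) → a • u + b • v = p - q → p ≠ q := by
    intro a b p q hab he h
    exact key a b hab (by rw [he, h, sub_self])
  have n1 : u ≠ -u := keyne 2 0 _ _ (by norm_num) (by module)
  have n2 : u ≠ v := keyne 1 (-1) _ _ (by norm_num) (by module)
  have n3 : u ≠ -v := keyne 1 1 _ _ (by norm_num) (by module)
  have n4 : u ≠ u + v := keyne 0 (-1) _ _ (by norm_num) (by module)
  have n5 : u ≠ -(u + v) := keyne 2 1 _ _ (by norm_num) (by module)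
  have n6 : -u ≠ v := keyne (-1) (-1) _ _ (by norm_num) (by module)
  have n7 : -u ≠ -v := keyne (-1) 1 _ _ (by norm_num) (by module)
  have n8 : -u ≠ u + v := keyne (-2) (-1) _ _ (by norm_num) (by module)
  have n9 : -u ≠ -(u + v) := keyne 0 1 _ _ (by norm_num) (by module)
  have n10 : v ≠ -v := keyne 0 2 _ _ (by norm_num) (by module)
  have n11 : v ≠ u + v := keyne (-1) 0 _ _ (by norm_num) (by module)
  have n12 : v ≠ -(u + v) := keyne 1 2 _ _ (by norm_num) (by module)
  have n13 : -v ≠ u + v := keyne (-1) (-2) _ _ (by norm_num) (by module)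
  have n14 : -v ≠ -(u + v) := keyne 1 0 _ _ (by norm_num) (by module)
  have n15 : u + v ≠ -(u + v) := keyne 2 2 _ _ (by norm_num) (by module)
  have hunion : (({u, -u} : Set A) ∪ {v, -v} ∪ {u + v, -(u + v)}) =
      ({u, -u, v, -v, u + v, -(u + v)} : Set A) := by
    ext g
    simp only [Set.mem_union, Set.mem_insert_iff, Set.mem_singleton_iff]
    tauto
  rw [hunion]
  rw [Set.ncard_insert_of_notMem (by
      simp only [Set.mem_insert_iff, Set.mem_singleton_iff]
      push_neg
      exact ⟨n1, n2, n3, n4, n5⟩) (Set.toFinite _),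
    Set.ncard_insert_of_notMem (by
      simp only [Set.mem_insert_iff, Set.mem_singleton_iff]
      push_neg
      exact ⟨n6, n7, n8, n9⟩) (Set.toFinite _),
    Set.ncard_insert_of_notMem (by
      simp only [Set.mem_insert_iff, Set.mem_singleton_iff]
      push_neg
      exact ⟨n10, n11, n12⟩) (Set.toFinite _),
    Set.ncard_insert_of_notMem (by
      simp only [Set.mem_insert_iff, Set.mem_singleton_iff]
      push_neg
      exact ⟨n13, n14⟩) (Set.toFinite _),
    Set.ncard_insert_of_notMem (by
      simp only [Set.mem_singleton_iff]
      exact n15) (Set.toFinite _),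
    Set.ncard_singleton]


theorem stmt14 (k : ℕ) (hk : 1 ≤ k) :
    ({g : ZMod (3 ^ k) × ZMod (3 ^ k) | addOrderOf g = 3}).ncard = 8 ∧
    ∀ x y : ZMod (3 ^ k) × ZMod (3 ^ k),
      AddSubgroup.closure {x, y} = ⊤ →
      ({g ∈ ASigma x y | addOrderOf g = 3}).ncard = 6 := by
  obtain ⟨j, rfl⟩ : ∃ j, k = j + 1 := ⟨k - 1, by omega⟩
  classical
  constructor
  · -- part 1
    set t : ZMod (3^(j+1)) := ((3^j : ℕ) : ZMod (3^(j+1))) with htdef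
    have ht := aux_t_ne j
    have h2t := aux_2t_ne j
    have ht2t := aux_t_ne_2t j
    have hset : {g : ZMod (3^(j+1)) × ZMod (3^(j+1)) | addOrderOf g = 3} =
        ↑((({0, t, 2*t} ×ˢ {0, t, 2*t} : Finset (ZMod (3^(j+1)) × ZMod (3^(j+1)))).erase 0)) := by
      ext g
      rw [Set.mem_setOf_eq, ord3_iff, Finset.coe_erase, Set.mem_diff]
      obtain ⟨a, b⟩ := g
      rw [Prod.smul_mk, Prod.mk_eq_zero, aux_L2 j a, aux_L2 j b]
      simp only [Finset.coe_product, Set.mem_prod, Finset.mem_coe, Finset.mem_insert,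
        Finset.mem_singleton, Set.mem_singleton_iff, Prod.mk_eq_zero, Prod.ext_iff,
        Prod.fst_zero, Prod.snd_zero, ne_eq]
      exact Iff.rfl
    rw [hset, Set.ncard_coe_finset]
    have htcard : ({0, t, 2*t} : Finset (ZMod (3^(j+1)))).card = 3 := by
      rw [Finset.card_insert_of_notMem (by
        simp only [Finset.mem_insert, Finset.mem_singleton]
        push_neg
        exact ⟨fun h => ht h.symm, fun h => h2t h.symm⟩),
        Finset.card_insert_of_notMem (by simp only [Finset.mem_singleton]; exact ht2t), Finset.card_singleton]
    rw [Finset.card_erase_of_mem (by simp), Finset.card_product, htcard]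
  · -- part 2
    intro x y hxy
    have key : ∀ a b : ℤ, ¬((3:ℤ) ∣ a ∧ (3:ℤ) ∣ b) →
        a • ((3^j) • x) + b • ((3^j) • y) ≠ 0 :=
      fun a b hab h => hab (aux_indepG j x y hxy a b h)
    have hu0 : (3^j) • x ≠ 0 := by
      intro h
      exact key 1 0 (by norm_num) (by rw [one_zsmul, zero_zsmul, add_zero]; exact h)
    have hv0 : (3^j) • y ≠ 0 := by
      intro h
      exact key 0 1 (by norm_num) (by rw [one_zsmul, zero_zsmul, zero_add]; exact h)
    have hw0 : (3^j) • (x + y) ≠ 0 := by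
      intro h
      rw [smul_add] at h
      exact key 1 1 (by norm_num) (by rw [one_zsmul, one_zsmul]; exact h)
    have hsplit : {g ∈ ASigma x y | addOrderOf g = 3} =
        {g ∈ (AddSubgroup.zmultiples x : Set _) | addOrderOf g = 3} ∪
        {g ∈ (AddSubgroup.zmultiples y : Set _) | addOrderOf g = 3} ∪
        {g ∈ (AddSubgroup.zmultiples (x+y) : Set _) | addOrderOf g = 3} := by
      ext g
      simp only [ASigma, Set.mem_union, Set.mem_setOf_eq]
      tauto
    rw [hsplit, aux_D x hu0, aux_D y hv0, aux_D (x+y) hw0, smul_add]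
    exact aux_six _ _ key
end

section
/- Let G be a finite abelian 2-generated group that is not isomorphic to Cₙ × Cₙ for any n (i.e., its invariant factor decomposition is Cₘ × Cₙ with m properly dividing n, m < n, possibly m = 1 with G cyclic nontrivial). Then there exists a non-identity element g ∈ G lying in Σ(x,y) for every generating pair (x,y) of G. -/
namespace AddSubgroup

variable {G : Type*} [AddCommGroup G]

theorem mem_zmultiples_of_mem_zmultiples_of_prime {p : ℕ} (hp : p.Prime) {g h : G}
    (hpg : p • g = 0) (hh : h ∈ zmultiples g) (h0 : h ≠ 0) : g ∈ zmultiples h := by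
  have := Fact.mk hp
  obtain ⟨j, rfl⟩ := hh
  have hg : g ≠ 0 := by rintro rfl; simp at h0
  have horder := addOrderOf_eq_prime hpg hg
  rw [mem_zmultiples_zsmul_iff, horder]
  refine Nat.Coprime.symm ((hp.coprime_iff_not_dvd).2 fun hdvd => h0 ?_)
  rw [← addOrderOf_dvd_iff_zsmul_eq_zero, horder]
  exact Int.natCast_dvd.2 hdvd

theorem mem_zmultiples_of_nsmul_ne_zero {p k : ℕ} (hp : p.Prime) {g : G} (hpg : p • g = 0)
    (hk : ∀ z : G, k • z ∈ zmultiples g) {z : G} (hz : k • z ≠ 0) : g ∈ zmultiples z :=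
  zmultiples_le_of_mem (nsmul_mem (mem_zmultiples z) k)
    (mem_zmultiples_of_mem_zmultiples_of_prime hp hpg (hk z) hz)

theorem nsmul_ne_zero_or_of_closure_pair_eq_top {x y : G} (hxy : closure {x, y} = ⊤) {k : ℕ}
    (hG : ∃ z : G, k • z ≠ 0) : k • x ≠ 0 ∨ k • y ≠ 0 := by
  by_contra! hxy0
  obtain ⟨z, hz⟩ := hG
  have hle : closure {x, y} ≤ (nsmulAddMonoidHom k : G →+ G).ker := by
    rw [closure_le, Set.insert_subset_iff, Set.singleton_subset_iff]
    exact hxy0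
  exact hz (hle (hxy ▸ mem_top z))

theorem mem_aSigma_of_closure_pair_eq_top {p k : ℕ} (hp : p.Prime) {g : G} (hpg : p • g = 0)
    (hk : ∀ z : G, k • z ∈ zmultiples g) (hG : ∃ z : G, k • z ≠ 0) {x y : G}
    (hxy : closure {x, y} = ⊤) : g ∈ ASigma x y := by
  rcases nsmul_ne_zero_or_of_closure_pair_eq_top hxy hG with hx | hy
  · exact Or.inl (Or.inl (mem_zmultiples_of_nsmul_ne_zero hp hpg hk hx))
  · exact Or.inl (Or.inr (mem_zmultiples_of_nsmul_ne_zero hp hpg hk hy))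

end AddSubgroup

open AddSubgroup

theorem ZMod.nsmul_mem_zmultiples_zero_natCast {m n k : ℕ} [NeZero n] (hmk : m ∣ k)
    (z : ZMod m × ZMod n) : k • z ∈ zmultiples ((0, k) : ZMod m × ZMod n) := by
  refine ⟨z.2.val, Prod.ext ?_ ?_⟩
  · simp [(ZMod.natCast_eq_zero_iff k m).2 hmk]
  · simp [mul_comm]

theorem stmt16_general (m n : ℕ) (hdvd : m ∣ n) (hlt : m < n) :
    ∃ g : ZMod m × ZMod n, g ≠ 0 ∧
      ∀ x y : ZMod m × ZMod n,
        AddSubgroup.closure {x, y} = ⊤ → g ∈ ASigma x y := by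
  obtain ⟨t, rfl⟩ := hdvd
  obtain ⟨p, hp, s, rfl⟩ := Nat.exists_prime_and_dvd (n := t) (by rintro rfl; simp at hlt)
  have hm : 0 < m := Nat.pos_of_ne_zero (by rintro rfl; simp at hlt)
  have hs : 0 < s := Nat.pos_of_ne_zero (by rintro rfl; simp at hlt)
  have : NeZero (m * (p * s)) := ⟨(hm.trans hlt).ne'⟩
  have hms : ((m * s : ℕ) : ZMod (m * (p * s))) ≠ 0 := by
    rw [Ne, ZMod.natCast_eq_zero_iff]
    exact Nat.not_dvd_of_pos_of_lt (by positivity)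
      (Nat.mul_lt_mul_of_pos_left (lt_mul_left hs hp.one_lt) hm)
  have hpg : p • ((0, (m * s : ℕ)) : ZMod m × ZMod (m * (p * s))) = 0 := by
    ext
    · simp
    · rw [Prod.smul_snd, nsmul_eq_mul, ← Nat.cast_mul, Prod.snd_zero, ZMod.natCast_eq_zero_iff]
      exact ⟨1, by ring⟩
  refine ⟨(0, (m * s : ℕ)), by simpa using hms, fun x y hxy => ?_⟩
  refine mem_aSigma_of_closure_pair_eq_top hp hpg
    (ZMod.nsmul_mem_zmultiples_zero_natCast (dvd_mul_right m s)) ⟨(0, 1), ?_⟩ hxy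
  simpa using hms

theorem stmt16 (m n : ℕ) (hm : 1 ≤ m) (hdvd : m ∣ n) (hlt : m < n) :
    ∃ g : ZMod m × ZMod n, g ≠ 0 ∧
      ∀ x y : ZMod m × ZMod n,
        AddSubgroup.closure {x, y} = ⊤ → g ∈ ASigma x y :=
  stmt16_general m n hdvd hlt
end

section
/- Let p be a prime with p ≡ 1 (mod 3) and G = C₃ × (Cₚ ⋊ C₃) (nonabelian semidirect product). For any generating pair (g₁,g₂) of G, either both g₁ and g₂ have order 3 and lie outside the center, or (up to swapping and replacing by g₁g₂) one of the elements involved has order 3p. -/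
/-!
Killing the normal subgroup `Cₚ` maps `G` onto `C₃ × C₃`, which is not cyclic, so both generators
have nontrivial image there. Hence `3` divides their orders, which divide the exponent `3p`, so each
has order `3` or `3p`. Neither generator is central: a group generated by a central element and one
further element is abelian, while `G` is not, as `φ` is nontrivial.
-/

open Subgroup

namespace SemidirectProduct

variable {N G : Type*} [Group N] [Group G] {φ : G →* MulAut N}

theorem exponent_dvd_mul :
    Monoid.exponent (N ⋊[φ] G) ∣ Monoid.exponent G * Monoid.exponent N := by
  refine Monoid.exponent_dvd_of_forall_pow_eq_one fun x => ?_
  obtain ⟨n, hn⟩ : x ^ Monoid.exponent G ∈ (inl : N →* N ⋊[φ] G).range := by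
    rw [range_inl_eq_ker_rightHom, MonoidHom.mem_ker, map_pow, Monoid.pow_exponent_eq_one]
  rw [pow_mul, ← hn, ← map_pow, Monoid.pow_exponent_eq_one, map_one]

theorem exists_mul_ne_mul_of_ne_one (hφ : φ ≠ 1) : ∃ x y : N ⋊[φ] G, x * y ≠ y * x := by
  obtain ⟨g, hg⟩ : ∃ g, φ g ≠ 1 := by
    by_contra! h
    exact hφ (MonoidHom.ext h)
  obtain ⟨n, hn⟩ : ∃ n, φ g n ≠ n := by
    by_contra! h
    exact hg (MulEquiv.ext h)
  refine ⟨inl n, inr g, fun h => hn ?_⟩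
  simpa using (congrArg left h).symm

end SemidirectProduct

section

variable {G : Type*} [Group G]

theorem Subgroup.ne_one_of_closure_pair_eq_top (hG : ¬ IsCyclic G) {a b : G}
    (h : closure {a, b} = ⊤) : a ≠ 1 := by
  rintro rfl
  rw [closure_insert_one, ← zpowers_eq_closure] at h
  exact hG (isCyclic_iff_exists_zpowers_eq_top.2 ⟨b, h⟩)

theorem Subgroup.notMem_center_of_closure_pair_eq_top {x y : G} (hxy : x * y ≠ y * x) {a b : G}
    (h : closure {a, b} = ⊤) : a ∉ center G := by
  intro ha
  have hcomm : ∀ u ∈ ({a, b} : Set G), ∀ v ∈ ({a, b} : Set G), u * v = v * u := by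
    rintro u (rfl | rfl) v (rfl | rfl)
    · rfl
    · exact (mem_center_iff.1 ha v).symm
    · exact mem_center_iff.1 ha u
    · rfl
  have := isMulCommutative_closure hcomm
  exact hxy <| congrArg Subtype.val <|
    mul_comm' (⟨x, h ▸ mem_top x⟩ : closure {a, b}) ⟨y, h ▸ mem_top y⟩

theorem Subgroup.closure_pair_map_eq_top {H : Type*} [Group H] {f : G →* H}
    (hf : Function.Surjective f) {a b : G} (h : closure {a, b} = ⊤) :
    closure {f a, f b} = ⊤ := by
  rw [← Set.image_pair, ← MonoidHom.map_closure, h, map_top_of_surjective f hf]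

theorem dvd_orderOf_of_map_ne_one {H : Type*} [Group H] {q : ℕ} (hq : q.Prime)
    (hH : ∀ h : H, h ^ q = 1) (f : G →* H) {g : G} (hg : f g ≠ 1) : q ∣ orderOf g := by
  have := Fact.mk hq
  exact orderOf_eq_prime (hH _) hg ▸ orderOf_map_dvd f g

end

theorem Nat.eq_or_eq_mul_of_dvd_of_dvd_mul_prime {n q p : ℕ} (hq : 0 < q) (hp : p.Prime)
    (h₁ : q ∣ n) (h₂ : n ∣ q * p) : n = q ∨ n = q * p := by
  obtain ⟨e, rfl⟩ := h₁
  rcases (Nat.dvd_prime hp).1 (Nat.dvd_of_mul_dvd_mul_left hq h₂) with rfl | rfl <;> simp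

section

variable {q : ℕ} [Fact q.Prime] {N : Type*} [Group N] {φ : Multiplicative (ZMod q) →* MulAut N}

theorem rightHom_prod_ne_one_of_closure_pair_eq_top
    {g₁ g₂ : Multiplicative (ZMod q) × (N ⋊[φ] Multiplicative (ZMod q))}
    (h : closure {g₁, g₂} = ⊤) : (g₁.1, SemidirectProduct.rightHom g₁.2) ≠ 1 := by
  have hcyc : ¬ IsCyclic (Multiplicative (ZMod q) × Multiplicative (ZMod q)) := by
    simp [Group.isCyclic_prod_iff, (Fact.out : q.Prime).ne_one]
  let π := (MonoidHom.id (Multiplicative (ZMod q))).prodMap (SemidirectProduct.rightHom (φ := φ))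
  have hπ : Function.Surjective π :=
    Prod.map_surjective.2 ⟨Function.surjective_id, SemidirectProduct.rightHom_surjective⟩
  exact ne_one_of_closure_pair_eq_top hcyc (closure_pair_map_eq_top hπ h)

theorem orderOf_eq_of_rightHom_prod_ne_one {p : ℕ} (hp : p.Prime) (hN : Monoid.exponent N ∣ p)
    {g : Multiplicative (ZMod q) × (N ⋊[φ] Multiplicative (ZMod q))}
    (hg : (g.1, SemidirectProduct.rightHom g.2) ≠ 1) (hgp : orderOf g ≠ q * p) :
    orderOf g = q := by
  have hq : q.Prime := Fact.out
  have hexpq : Monoid.exponent (Multiplicative (ZMod q)) = q := by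
    rw [Monoid.exponent_multiplicative, ZMod.exponent]
  have hπ (h : Multiplicative (ZMod q) × Multiplicative (ZMod q)) : h ^ q = 1 := by
    simpa [Monoid.exponent_prod, hexpq] using Monoid.pow_exponent_eq_one h
  have hdvd : orderOf g ∣ q * p := by
    refine (Monoid.order_dvd_exponent g).trans ?_
    rw [Monoid.exponent_prod, hexpq]
    refine lcm_dvd (dvd_mul_right q p) (SemidirectProduct.exponent_dvd_mul.trans ?_)
    rw [hexpq]
    exact mul_dvd_mul_left q hN
  exact (Nat.eq_or_eq_mul_of_dvd_of_dvd_mul_prime hq.pos hp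
    (dvd_orderOf_of_map_ne_one hq hπ ((MonoidHom.id _).prodMap SemidirectProduct.rightHom) hg)
    hdvd).resolve_right hgp

end

theorem stmt18_general (p : ℕ) (hp : p.Prime)
    (φ : Multiplicative (ZMod 3) →* MulAut (Multiplicative (ZMod p)))
    (hφ : Function.Injective φ)
    (g₁ g₂ : Multiplicative (ZMod 3) ×
      (SemidirectProduct (Multiplicative (ZMod p)) (Multiplicative (ZMod 3)) φ))
    (hgen : Subgroup.closure {g₁, g₂} = ⊤) :
    (orderOf g₁ = 3 ∧ orderOf g₂ = 3 ∧
      g₁ ∉ Subgroup.center _ ∧ g₂ ∉ Subgroup.center _) ∨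
    (3 * p = orderOf g₁ ∨ 3 * p = orderOf g₂ ∨ 3 * p = orderOf (g₁ * g₂)) := by
  refine or_iff_not_imp_right.2 fun h3p => ?_
  push Not at h3p
  have hN : Monoid.exponent (Multiplicative (ZMod p)) ∣ p := by
    rw [Monoid.exponent_multiplicative, ZMod.exponent]
  have hgen' : closure {g₂, g₁} = ⊤ := Set.pair_comm g₁ g₂ ▸ hgen
  have hφ1 : φ ≠ 1 := fun h =>
    hφ.ne (a₁ := Multiplicative.ofAdd 1) (a₂ := 1) (by simp) (by simp [h])
  obtain ⟨x, y, hxy⟩ := SemidirectProduct.exists_mul_ne_mul_of_ne_one hφ1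
  have hxy' : ((1 : Multiplicative (ZMod 3)), x) * (1, y) ≠ (1, y) * (1, x) :=
    fun h => hxy (congrArg Prod.snd h)
  exact ⟨orderOf_eq_of_rightHom_prod_ne_one hp hN
      (rightHom_prod_ne_one_of_closure_pair_eq_top hgen) h3p.1.symm,
    orderOf_eq_of_rightHom_prod_ne_one hp hN
      (rightHom_prod_ne_one_of_closure_pair_eq_top hgen') h3p.2.1.symm,
    notMem_center_of_closure_pair_eq_top hxy' hgen,
    notMem_center_of_closure_pair_eq_top hxy' hgen'⟩

theorem stmt18 (p : ℕ) (hp : p.Prime) (hmod : p % 3 = 1)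
    (φ : Multiplicative (ZMod 3) →* MulAut (Multiplicative (ZMod p)))
    (hφ : Function.Injective φ)
    (g₁ g₂ : Multiplicative (ZMod 3) ×
      (SemidirectProduct (Multiplicative (ZMod p)) (Multiplicative (ZMod 3)) φ))
    (hgen : Subgroup.closure {g₁, g₂} = ⊤) :
    (orderOf g₁ = 3 ∧ orderOf g₂ = 3 ∧
      g₁ ∉ Subgroup.center _ ∧ g₂ ∉ Subgroup.center _) ∨
    (3 * p = orderOf g₁ ∨ 3 * p = orderOf g₂ ∨ 3 * p = orderOf (g₁ * g₂)) :=
  stmt18_general p hp φ hφ g₁ g₂ hgen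
end
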